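/- Let G_q be the distribution of an i.i.d. D_q-sequence truncated just after the first occurrence of the delimiter ♯. If u ~ G_q, then for any history h, e_q^h(c^h(u)) ~ G_q. -/

import Mathlib

open scoped Classical

/-- Bounding set reached from the full state space after reading the history `h`. -/
def wordOp {S A : Type} (op : Set S → A → Set S) (h : List A) : Set S :=
  h.foldl op Set.univ

/-- A letter is active after history `h` if it is the delimiter `♯` or changes the
bounding set `S ∘ h`. -/
def IsActive {S A : Type} (op : Set S → A → Set S) (sharp : A) (h : List A) (a : A) :
    Prop :=
  a = sharp ∨ op (wordOp op h) a ≠ wordOp op h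

/-- The `h`-contraction `c^h`: remove passive letters relative to the evolving
bounding set starting from `S ∘ h`. -/
noncomputable def contract {S A : Type} (op : Set S → A → Set S) (sharp : A) :
    List A → List A → List A
  | _, [] => []
  | h, a :: u =>
    if IsActive op sharp h a then a :: contract op sharp (h ++ [a]) u
    else contract op sharp h u
  termination_by h u => u.length

open MeasureTheory
open scoped Classical

/-- The distribution `D_q`: mass `q` on `♯`, mass `(1-q)·D(a)` otherwise. -/
noncomputable def DqFun {A : Type} (D : A → ENNReal) (sharp : A) (q : ENNReal)
    (a : A) : ENNReal :=
  if a = sharp then q else (1 - q) * D a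

/-- `G_q`: the law of an i.i.d. `D_q`-sequence truncated just after the first `♯`,
as a function assigning to each finite word its probability (its letters are i.i.d.
`D_q`, the word ends with its unique `♯`). -/
noncomputable def GqProb {A : Type} (Dq : A → ENNReal) (sharp : A) (w : List A) :
    ENNReal :=
  if w ≠ [] ∧ w.getLast? = some sharp ∧ sharp ∉ w.dropLast then (w.map Dq).prod
  else 0

/-- Total `D_q`-mass of the letters active after history `h`. -/
noncomputable def actProb {S A : Type} [Fintype A] (Dq : A → ENNReal)
    (op : Set S → A → Set S) (sharp : A) (h : List A) : ENNReal :=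
  ∑ a : A, if IsActive op sharp h a then Dq a else 0

/-- The transition kernel of the `(h,q)`-expansion: the probability that the
expansion of the (`h`-contracted) word `x` produces the word `w`.  Each inserted
passive letter `p` contributes `D_q(Inact)·D_q(p | Inact) = D_q(p)`, each emitted
(active) letter contributes the stopping probability `D_q(Act)` at its position;
`w` must contract back to `x` and must not end with inserted passive letters. -/
noncomputable def expandKernel {S A : Type} [Fintype A] (Dq : A → ENNReal)
    (op : Set S → A → Set S) (sharp : A) (h x w : List A) : ENNReal :=
  if contract op sharp h w = x ∧
      (w ≠ [] → IsActive op sharp (h ++ w.take (w.length - 1))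
        (w.getD (w.length - 1) sharp)) then
    ∏ i ∈ Finset.range w.length,
      if IsActive op sharp (h ++ w.take i) (w.getD i sharp) then
        actProb Dq op sharp (h ++ w.take i)
      else Dq (w.getD i sharp)
  else 0

/-! Write `T_h(y)` for the `G_q`-mass of the words whose `h`-contraction is `y`. Splitting off
the first letter gives `T_h(b :: x) = Pass(h) · T_h(b :: x) + D_q(b) · T_{hb}(x)` for an active
letter `b ≠ ♯`, hence `Act(h) · T_h(b :: x) = D_q(b) · T_{hb}(x)`: the stopping factor `Act(h)`
of the expansion exactly cancels the geometric series of passive letters skipped by the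
contraction, while each re-inserted passive letter `p` carries its own weight `D_q(p)`. Induction
on `w` then gives `T_h(c^h w) · weight_h(w) = G_q(w)`, which is the mass the joint law puts on
`{V = w}`. Countable subadditivity (no measurability of `U`, `V` is assumed) bounds
`μ {V = w}` by `G_q(w)`, and as `G_q` has total mass `1` the bound is an equality. -/

open scoped ENNReal

lemma ENNReal.mul_eq_of_eq_mul_add {a p t c : ℝ≥0∞} (hap : a + p = 1) (ht : t ≠ ⊤)
    (h : t = p * t + c) : a * t = c := by
  have hp : p ≠ ⊤ := ne_top_of_le_ne_top ENNReal.one_ne_top (hap ▸ le_add_self)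
  have hsum : a * t + p * t = c + p * t := by
    rw [← add_mul, hap, one_mul, add_comm]
    exact h
  exact (ENNReal.add_left_inj (ENNReal.mul_ne_top hp ht)).mp hsum

section ListSums

variable {α : Type*}

lemma ENNReal.tsum_list_eq_tsum_cons {f : List α → ℝ≥0∞} (hf : f [] = 0) :
    ∑' l, f l = ∑' (a : α) (l : List α), f (a :: l) := by
  have hinj : Function.Injective fun p : α × List α => p.1 :: p.2 := by
    rintro ⟨a, l⟩ ⟨b, m⟩ hp
    simpa using hp
  have hsupp : Function.support f ⊆ Set.range fun p : α × List α => p.1 :: p.2 := by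
    rintro (_ | ⟨a, l⟩) hl
    · exact absurd hf hl
    · exact ⟨(a, l), rfl⟩
  rw [← ENNReal.tsum_prod, hinj.tsum_eq hsupp]

lemma ENNReal.tsum_list_prod_map [Fintype α] (f : α → ℝ≥0∞) :
    ∑' l : List α, (l.map f).prod = ∑' n : ℕ, (∑ a, f a) ^ n := by
  rw [← List.equivSigmaTuple.symm.tsum_eq]
  simp only [List.equivSigmaTuple_symm_apply]
  rw [ENNReal.tsum_sigma fun n (t : Fin n → α) => ((List.ofFn t).map f).prod]
  refine tsum_congr fun n => ?_
  simp [List.map_ofFn, List.prod_ofFn, Fintype.sum_pow, tsum_fintype]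

end ListSums

lemma measure_eq_of_forall_le_of_tsum_eq_one {Ω β : Type*} [MeasurableSpace Ω] [Countable β]
    {μ : Measure Ω} [IsProbabilityMeasure μ] {V : Ω → β} {p : β → ℝ≥0∞}
    (hp : ∑' b, p b = 1) (hle : ∀ b, μ {ω | V ω = b} ≤ p b) (b : β) :
    μ {ω | V ω = b} = p b := by
  refine (hle b).eq_of_not_lt fun hlt => ?_
  have hcover : (1 : ℝ≥0∞) ≤ ∑' b, μ {ω | V ω = b} :=
    calc (1 : ℝ≥0∞) = μ Set.univ := measure_univ.symm
      _ ≤ μ (⋃ b, {ω | V ω = b}) := measure_mono fun ω _ => Set.mem_iUnion.mpr ⟨V ω, rfl⟩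
      _ ≤ ∑' b, μ {ω | V ω = b} := measure_iUnion_le _
  have hfin : ∑' b, μ {ω | V ω = b} ≠ ⊤ :=
    ne_top_of_le_ne_top (hp ▸ ENNReal.one_ne_top) (ENNReal.tsum_le_tsum hle)
  exact (hcover.trans_lt ((ENNReal.tsum_lt_tsum hfin hle hlt).trans_eq hp)).false

section Contraction

variable {S A : Type} {op : Set S → A → Set S} {sharp : A}

lemma wordOp_append_singleton (h : List A) (a : A) :
    wordOp op (h ++ [a]) = op (wordOp op h) a :=
  List.foldl_concat ..

lemma wordOp_append_singleton_of_not_isActive {h : List A} {a : A}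
    (ha : ¬ IsActive op sharp h a) : wordOp op (h ++ [a]) = wordOp op h := by
  rw [IsActive, not_or, not_not] at ha
  rw [wordOp_append_singleton, ha.2]

lemma isActive_congr {h h' : List A} (e : wordOp op h = wordOp op h') (a : A) :
    IsActive op sharp h a ↔ IsActive op sharp h' a := by
  rw [IsActive, IsActive, e]

lemma contract_nil (h : List A) : contract op sharp h [] = [] := by
  rw [contract]

lemma contract_cons (h : List A) (a : A) (u : List A) :
    contract op sharp h (a :: u) =
      if IsActive op sharp h a then a :: contract op sharp (h ++ [a]) u
      else contract op sharp h u := by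
  rw [contract]

lemma contract_congr (u : List A) {h h' : List A} (e : wordOp op h = wordOp op h') :
    contract op sharp h u = contract op sharp h' u := by
  induction u generalizing h h' with
  | nil => rw [contract_nil, contract_nil]
  | cons a u ih =>
    have e' : wordOp op (h ++ [a]) = wordOp op (h' ++ [a]) := by
      rw [wordOp_append_singleton, wordOp_append_singleton, e]
    rw [contract_cons, contract_cons, if_congr (isActive_congr e a) rfl rfl, ih e, ih e']

lemma sharp_mem_contract {u : List A} (hu : sharp ∈ u) (h : List A) :
    sharp ∈ contract op sharp h u := by
  induction u generalizing h with
  | nil => cases hu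
  | cons a u ih =>
    rw [contract_cons]
    split_ifs with ha
    · rcases List.mem_cons.mp hu with rfl | hu
      · exact List.mem_cons_self
      · exact List.mem_cons_of_mem _ (ih hu _)
    · rcases List.mem_cons.mp hu with rfl | hu
      · exact absurd (Or.inl rfl) ha
      · exact ih hu h

/-- The last letter of `w` is active after the history `h` followed by the rest of `w`
(vacuous for `w = []`). -/
def EndsActive (op : Set S → A → Set S) (sharp : A) (h w : List A) : Prop :=
  w ≠ [] → IsActive op sharp (h ++ w.take (w.length - 1)) (w.getD (w.length - 1) sharp)

lemma EndsActive.of_cons {h w : List A} {b : A} (hw : EndsActive op sharp h (b :: w)) :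
    EndsActive op sharp (h ++ [b]) w := by
  intro hne
  obtain ⟨c, t, rfl⟩ := List.exists_cons_of_ne_nil hne
  simpa [List.append_assoc] using hw (List.cons_ne_nil _ _)

lemma EndsActive.isActive_of_singleton {h : List A} {b : A}
    (hw : EndsActive op sharp h [b]) : IsActive op sharp h b := by
  simpa using hw (List.cons_ne_nil _ _)

lemma contract_ne_nil_of_endsActive {h w : List A} (hne : w ≠ [])
    (hw : EndsActive op sharp h w) : contract op sharp h w ≠ [] := by
  induction w generalizing h with
  | nil => exact absurd rfl hne
  | cons b w ih =>
    rw [contract_cons]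
    split_ifs with hb
    · exact List.cons_ne_nil _ _
    · have hw' : w ≠ [] := by
        rintro rfl
        exact hb hw.isActive_of_singleton
      rw [contract_congr w (wordOp_append_singleton_of_not_isActive hb).symm]
      exact ih hw' hw.of_cons

end Contraction

section Truncation

variable {A : Type} {Dq : A → ℝ≥0∞} {sharp : A}

lemma GqProb_nil : GqProb Dq sharp [] = 0 := by
  simp [GqProb]

lemma GqProb_cons_of_ne {b : A} (hb : b ≠ sharp) (v : List A) :
    GqProb Dq sharp (b :: v) = Dq b * GqProb Dq sharp v := by
  cases v with
  | nil => simp [GqProb, hb]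
  | cons c t =>
    simp [GqProb, List.dropLast_cons_cons, Ne.symm hb, mul_ite]

lemma GqProb_sharp_cons (v : List A) :
    GqProb Dq sharp (sharp :: v) = if v = [] then Dq sharp else 0 := by
  cases v with
  | nil => simp [GqProb]
  | cons c t => simp [GqProb, List.dropLast_cons_cons]

lemma GqProb_append_sharp (v : List A) :
    GqProb Dq sharp (v ++ [sharp]) =
      (v.map fun a => if a = sharp then 0 else Dq a).prod * Dq sharp := by
  by_cases hv : sharp ∈ v
  · have h0 : (0 : ℝ≥0∞) ∈ v.map fun a => if a = sharp then 0 else Dq a :=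
      List.mem_map.mpr ⟨sharp, hv, if_pos rfl⟩
    simp [GqProb, hv, List.prod_eq_zero h0]
  · have hmap : v.map Dq = v.map fun a => if a = sharp then 0 else Dq a :=
      List.map_congr_left fun a ha => (if_neg (ne_of_mem_of_not_mem ha hv)).symm
    simp [GqProb, hv, hmap]

lemma eq_append_sharp_of_GqProb_ne_zero {u : List A} (hu : GqProb Dq sharp u ≠ 0) :
    u = u.dropLast ++ [sharp] := by
  unfold GqProb at hu
  split_ifs at hu with hc
  · obtain ⟨hne, hlast, -⟩ := hc
    rw [List.getLast?_eq_some_getLast hne, Option.some_inj] at hlast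
    rw [← hlast, List.dropLast_append_getLast]
  · exact absurd rfl hu

lemma sharp_mem_of_GqProb_ne_zero {u : List A} (hu : GqProb Dq sharp u ≠ 0) : sharp ∈ u := by
  rw [eq_append_sharp_of_GqProb_ne_zero hu]
  exact List.mem_append_right _ (List.mem_singleton_self _)

variable [Fintype A]

lemma tsum_GqProb (hsum : ∑ a, Dq a = 1) (hsharp : Dq sharp ≠ 0) :
    ∑' w, GqProb Dq sharp w = 1 := by
  have hinj : Function.Injective fun v : List A => v ++ [sharp] :=
    fun v w hvw => List.append_cancel_right hvw
  have hsupp : Function.support (GqProb Dq sharp) ⊆ Set.range fun v : List A => v ++ [sharp] :=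
    fun u hu => ⟨u.dropLast, (eq_append_sharp_of_GqProb_ne_zero hu).symm⟩
  have hle : Dq sharp ≤ 1 := hsum ▸ Finset.single_le_sum (fun _ _ => zero_le) (Finset.mem_univ _)
  have hfin : Dq sharp ≠ ⊤ := ne_top_of_le_ne_top ENNReal.one_ne_top hle
  have hrest : ∑ a, (if a = sharp then 0 else Dq a) = 1 - Dq sharp := by
    have hsplit : Dq sharp + ∑ a, (if a = sharp then 0 else Dq a) = 1 := by
      rw [← hsum, ← Fintype.sum_ite_eq' sharp Dq, ← Finset.sum_add_distrib]
      exact Finset.sum_congr rfl fun a _ => by split_ifs with ha <;> simp [ha]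
    rw [← hsplit, ENNReal.add_sub_cancel_left hfin]
  rw [← hinj.tsum_eq hsupp, tsum_congr GqProb_append_sharp, ENNReal.tsum_mul_right,
    ENNReal.tsum_list_prod_map, hrest, ENNReal.tsum_geometric,
    ENNReal.sub_sub_cancel ENNReal.one_ne_top hle, ENNReal.inv_mul_cancel hsharp hfin]

end Truncation

section Fiber

variable {S A : Type} {Dq : A → ℝ≥0∞} {op : Set S → A → Set S} {sharp : A}

noncomputable def fiberMass (Dq : A → ℝ≥0∞) (op : Set S → A → Set S) (sharp : A)
    (h y : List A) : ℝ≥0∞ :=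
  ∑' u, if contract op sharp h u = y then GqProb Dq sharp u else 0

lemma fiberMass_congr {h h' : List A} (e : wordOp op h = wordOp op h') (y : List A) :
    fiberMass Dq op sharp h y = fiberMass Dq op sharp h' y :=
  tsum_congr fun u => by rw [contract_congr u e]

lemma fiberMass_nil (h : List A) : fiberMass Dq op sharp h [] = 0 := by
  refine ENNReal.tsum_eq_zero.mpr fun u => ?_
  refine ite_eq_right_iff.mpr fun hu => ?_
  by_contra hne
  simpa [hu] using sharp_mem_contract (op := op) (sharp_mem_of_GqProb_ne_zero hne) h

lemma fiberMass_le_tsum_GqProb (h y : List A) :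
    fiberMass Dq op sharp h y ≤ ∑' u, GqProb Dq sharp u :=
  ENNReal.tsum_le_tsum fun _ => by split_ifs <;> simp

lemma GqProb_eq_zero_of_not_endsActive {h w : List A} (hw : ¬ EndsActive op sharp h w) :
    GqProb Dq sharp w = 0 := by
  by_contra hne
  refine hw fun _ => Or.inl ?_
  rw [eq_append_sharp_of_GqProb_ne_zero hne]
  simp

variable [Fintype A]

noncomputable def passProb (Dq : A → ℝ≥0∞) (op : Set S → A → Set S) (sharp : A)
    (h : List A) : ℝ≥0∞ :=
  ∑ a, if IsActive op sharp h a then 0 else Dq a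

lemma actProb_add_passProb (hsum : ∑ a, Dq a = 1) (h : List A) :
    actProb Dq op sharp h + passProb Dq op sharp h = 1 := by
  rw [← hsum, actProb, passProb, ← Finset.sum_add_distrib]
  exact Finset.sum_congr rfl fun a _ => by split_ifs <;> simp

/-- First-letter decomposition: a word contracting to `b :: x` starts with either a passive
letter, after which the bounding set is unchanged, or with `b` itself. -/
lemma fiberMass_cons {h : List A} {b : A} (hb : IsActive op sharp h b) (x : List A) :
    fiberMass Dq op sharp h (b :: x) =
      passProb Dq op sharp h * fiberMass Dq op sharp h (b :: x) +
        ∑' v, if contract op sharp (h ++ [b]) v = x then GqProb Dq sharp (b :: v) else 0 := by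
  set tail := ∑' v, if contract op sharp (h ++ [b]) v = x then GqProb Dq sharp (b :: v) else 0
  set F : List A → ℝ≥0∞ := fun u =>
    if contract op sharp h u = b :: x then GqProb Dq sharp u else 0
  have hpassive (a : A) (ha : ¬ IsActive op sharp h a) :
      ∑' v, F (a :: v) = Dq a * fiberMass Dq op sharp h (b :: x) := by
    rw [fiberMass, ← ENNReal.tsum_mul_left]
    simp only [F, contract_cons, if_neg ha, GqProb_cons_of_ne fun e => ha (Or.inl e), mul_ite,
      mul_zero]
  have hactive (a : A) (ha : IsActive op sharp h a) :
      ∑' v, F (a :: v) = if a = b then tail else 0 := by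
    split_ifs with hab
    · subst hab
      simp only [F, tail, contract_cons, if_pos ha, List.cons.injEq, true_and]
    · simp [F, contract_cons, if_pos ha, hab]
  calc fiberMass Dq op sharp h (b :: x) = ∑ a, ∑' v, F (a :: v) := by
        rw [fiberMass, ENNReal.tsum_list_eq_tsum_cons (by simp [GqProb_nil]), tsum_fintype]
    _ = ∑ a, ((if IsActive op sharp h a then 0 else Dq a) * fiberMass Dq op sharp h (b :: x)
          + if a = b then tail else 0) := by
        refine Finset.sum_congr rfl fun a _ => ?_
        by_cases ha : IsActive op sharp h a
        · simp [hactive a ha, ha]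
        · have hab : a ≠ b := fun e => ha (e ▸ hb)
          simp [hpassive a ha, ha, hab]
    _ = passProb Dq op sharp h * fiberMass Dq op sharp h (b :: x) + tail := by
        rw [Finset.sum_add_distrib, ← Finset.sum_mul, Fintype.sum_ite_eq']
        rfl

lemma actProb_mul_fiberMass_cons (hsum : ∑ a, Dq a = 1) (hsharp : Dq sharp ≠ 0)
    {h : List A} {b : A} (hb : IsActive op sharp h b) (x : List A) :
    actProb Dq op sharp h * fiberMass Dq op sharp h (b :: x) =
      ∑' v, if contract op sharp (h ++ [b]) v = x then GqProb Dq sharp (b :: v) else 0 := by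
  refine ENNReal.mul_eq_of_eq_mul_add (actProb_add_passProb hsum h) ?_ (fiberMass_cons hb x)
  refine ne_top_of_le_ne_top ?_ (fiberMass_le_tsum_GqProb h _)
  rw [tsum_GqProb hsum hsharp]
  exact ENNReal.one_ne_top

end Fiber

section Expansion

variable {S A : Type} [Fintype A] {Dq : A → ℝ≥0∞} {op : Set S → A → Set S} {sharp : A}

noncomputable def expandWeight (Dq : A → ℝ≥0∞) (op : Set S → A → Set S) (sharp : A)
    (h w : List A) : ℝ≥0∞ :=
  ∏ i ∈ Finset.range w.length,
    if IsActive op sharp (h ++ w.take i) (w.getD i sharp) then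
      actProb Dq op sharp (h ++ w.take i)
    else Dq (w.getD i sharp)

lemma expandKernel_eq (h x w : List A) :
    expandKernel Dq op sharp h x w =
      if contract op sharp h w = x ∧ EndsActive op sharp h w then expandWeight Dq op sharp h w
      else 0 :=
  if_congr Iff.rfl rfl rfl

lemma expandWeight_nil (h : List A) : expandWeight Dq op sharp h [] = 1 := by
  simp [expandWeight]

lemma expandWeight_cons (h : List A) (b : A) (w : List A) :
    expandWeight Dq op sharp h (b :: w) =
      (if IsActive op sharp h b then actProb Dq op sharp h else Dq b) *
        expandWeight Dq op sharp (h ++ [b]) w := by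
  rw [expandWeight, expandWeight, List.length_cons, Finset.prod_range_succ', mul_comm]
  congr 1
  · simp
  · exact Finset.prod_congr rfl fun i _ => by
      rw [List.take_succ_cons, List.getD_cons_succ, List.append_cons]

lemma actProb_mul_fiberMass_cons_of_ne (hsum : ∑ a, Dq a = 1) (hsharp : Dq sharp ≠ 0)
    {h : List A} {b : A} (hb : IsActive op sharp h b) (hbs : b ≠ sharp) (x : List A) :
    actProb Dq op sharp h * fiberMass Dq op sharp h (b :: x) =
      Dq b * fiberMass Dq op sharp (h ++ [b]) x := by
  rw [actProb_mul_fiberMass_cons hsum hsharp hb, fiberMass, ← ENNReal.tsum_mul_left]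
  simp only [GqProb_cons_of_ne hbs, mul_ite, mul_zero]

lemma actProb_mul_fiberMass_sharp_cons (hsum : ∑ a, Dq a = 1) (hsharp : Dq sharp ≠ 0)
    (h x : List A) :
    actProb Dq op sharp h * fiberMass Dq op sharp h (sharp :: x) =
      if x = [] then Dq sharp else 0 := by
  rw [actProb_mul_fiberMass_cons hsum hsharp (Or.inl rfl), tsum_eq_single []]
  · simp [GqProb_sharp_cons, contract_nil, eq_comm]
  · intro v hv
    simp [GqProb_sharp_cons, hv]

theorem fiberMass_contract_mul_expandWeight (hsum : ∑ a, Dq a = 1) (hsharp : Dq sharp ≠ 0)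
    {h w : List A} (hw : EndsActive op sharp h w) :
    fiberMass Dq op sharp h (contract op sharp h w) * expandWeight Dq op sharp h w =
      GqProb Dq sharp w := by
  induction w generalizing h with
  | nil => rw [contract_nil, fiberMass_nil, zero_mul, GqProb_nil]
  | cons b w ih =>
    rw [contract_cons, expandWeight_cons]
    by_cases hb : IsActive op sharp h b
    · rw [if_pos hb, if_pos hb, ← mul_assoc, mul_comm (fiberMass _ _ _ _ _)]
      by_cases hbs : b = sharp
      · subst hbs
        rw [actProb_mul_fiberMass_sharp_cons hsum hsharp, GqProb_sharp_cons]
        by_cases hw' : w = []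
        · subst hw'
          simp [contract_nil, expandWeight_nil]
        · simp [contract_ne_nil_of_endsActive hw' hw.of_cons, hw']
      · rw [actProb_mul_fiberMass_cons_of_ne hsum hsharp hb hbs, mul_assoc, ih hw.of_cons,
          GqProb_cons_of_ne hbs]
    · have e := (wordOp_append_singleton_of_not_isActive hb).symm
      rw [if_neg hb, if_neg hb, contract_congr w e, fiberMass_congr e, mul_left_comm,
        ih hw.of_cons, GqProb_cons_of_ne fun e => hb (Or.inl e)]

theorem tsum_GqProb_mul_expandKernel (hsum : ∑ a, Dq a = 1) (hsharp : Dq sharp ≠ 0)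
    (h w : List A) :
    ∑' u, GqProb Dq sharp u * expandKernel Dq op sharp h (contract op sharp h u) w =
      GqProb Dq sharp w := by
  by_cases hw : EndsActive op sharp h w
  · calc ∑' u, GqProb Dq sharp u * expandKernel Dq op sharp h (contract op sharp h u) w
          = ∑' u, (if contract op sharp h u = contract op sharp h w then GqProb Dq sharp u
              else 0) * expandWeight Dq op sharp h w :=
          tsum_congr fun u => by
            by_cases hu : contract op sharp h u = contract op sharp h w
            · simp [expandKernel_eq, hu, hw]
            · simp [expandKernel_eq, hw, hu, Ne.symm hu]
      _ = GqProb Dq sharp w := by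
          rw [ENNReal.tsum_mul_right]
          exact fiberMass_contract_mul_expandWeight hsum hsharp hw
  · simp [expandKernel_eq, hw, GqProb_eq_zero_of_not_endsActive hw]

end Expansion

lemma sum_DqFun {A : Type} [Fintype A] {D : A → ℝ≥0∞} {sharp : A} (hD : D sharp = 0)
    (hDsum : ∑ a, D a = 1) {q : ℝ≥0∞} (hq : q ≤ 1) : ∑ a, DqFun D sharp q a = 1 := by
  have hsplit (a : A) : DqFun D sharp q a = (if a = sharp then q else 0) + (1 - q) * D a := by
    by_cases ha : a = sharp <;> simp [DqFun, ha, hD]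
  rw [Finset.sum_congr rfl fun a _ => hsplit a, Finset.sum_add_distrib, Fintype.sum_ite_eq',
    ← Finset.mul_sum, hDsum, mul_one, add_tsub_cancel_of_le hq]

/-- if `U ~ G_q` and `V` is the `(h,q)`-expansion of the `h`-contraction
of `U`, then `V ~ G_q`. -/
theorem stmt9 {S A : Type} [Fintype A] (op : Set S → A → Set S) (sharp : A)
    (D : A → ENNReal) (hDsharp : D sharp = 0) (hDsum : ∑ a, D a = 1)
    (q : ENNReal) (hq0 : 0 < q) (hq1 : q ≤ 1) (h : List A)
    {Ω : Type} [MeasurableSpace Ω] (μ : Measure Ω) [IsProbabilityMeasure μ]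
    (U V : Ω → List A)
    (hjoint : ∀ u w : List A,
      μ {ω | U ω = u ∧ V ω = w}
        = GqProb (DqFun D sharp q) sharp u *
            expandKernel (DqFun D sharp q) op sharp h (contract op sharp h u) w) :
    ∀ w : List A, μ {ω | V ω = w} = GqProb (DqFun D sharp q) sharp w := by
  have hsum : ∑ a, DqFun D sharp q a = 1 := sum_DqFun hDsharp hDsum hq1
  have hsharp : DqFun D sharp q sharp ≠ 0 := by simpa [DqFun] using hq0.ne'
  refine measure_eq_of_forall_le_of_tsum_eq_one (tsum_GqProb hsum hsharp) fun w => ?_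
  calc μ {ω | V ω = w} ≤ μ (⋃ u, {ω | U ω = u ∧ V ω = w}) :=
        measure_mono fun ω hω => Set.mem_iUnion.mpr ⟨U ω, rfl, hω⟩
    _ ≤ ∑' u, μ {ω | U ω = u ∧ V ω = w} := measure_iUnion_le _
    _ = ∑' u, GqProb (DqFun D sharp q) sharp u *
          expandKernel (DqFun D sharp q) op sharp h (contract op sharp h u) w :=
        tsum_congr fun u => hjoint u w
    _ = GqProb (DqFun D sharp q) sharp w := tsum_GqProb_mul_expandKernel hsum hsharp h w
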